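/- Constructor reconstruction in bounded time: there is a constant n ∈ ℕ (depending only on the signature) such that for every constructor c_i, every 0 ≤ m ≤ ar(c_i), and all constructor terms t_1,…,t_{ar(c_i)}, the open term CON^i_{x_1,…,x_m} with ⌈t_1⌉,…,⌈t_m⌉ substituted for x_1,…,x_m, applied to ⌈t_{m+1}⌉,…,⌈t_{ar(c_i)}⌉, reduces in at most n weak CBV steps to ⌈c_i(t_1,…,t_{ar(c_i)})⌉; moreover, if at least one of the arguments in positions m+1,…,ar(c_i) is the error term ⊥, it reduces in at most n steps to ⊥. -/

import Mathlib

/-- Pure untyped λ-terms with named variables. -/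
inductive Tm : Type
  | var : ℕ → Tm
  | lam : ℕ → Tm → Tm
  | app : Tm → Tm → Tm
deriving DecidableEq

namespace Tm

/-- Free variables. -/
def fv : Tm → Finset ℕ
  | var x => {x}
  | lam x M => fv M \ {x}
  | app M N => fv M ∪ fv N

/-- A term is closed when it has no free variables. -/
def Closed (M : Tm) : Prop := fv M = ∅

/-- Values: variables and abstractions. -/
def IsValue : Tm → Prop
  | var _ => True
  | lam _ _ => True
  | app _ _ => False

/-- (Naive) substitution `M{N/x}`. -/
def subst : Tm → ℕ → Tm → Tm
  | var y, x, N => if y = x then N else var y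
  | lam y P, x, N => if y = x then lam y P else lam y (subst P x N)
  | app P Q, x, N => app (subst P x N) (subst Q x N)

/-- Weak call-by-value reduction: β-redexes whose argument is a value,
closed under both application contexts, never under λ. -/
inductive Cbv : Tm → Tm → Prop
  | beta {x M V} : IsValue V → Cbv (app (lam x M) V) (subst M x V)
  | appL {M N L} : Cbv M N → Cbv (app M L) (app N L)
  | appR {M N L} : Cbv M N → Cbv (app L M) (app L N)

/-- The subterm relation on λ-terms. -/
inductive Sub : Tm → Tm → Prop
  | refl (M) : Sub M M
  | lam {M N x} : Sub M N → Sub M (lam x N)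
  | appL {M N L} : Sub M N → Sub M (app N L)
  | appR {M N L} : Sub M L → Sub M (app N L)

end Tm

/-- `M N₁ … Nₖ` (left-nested application). -/
def appList : Tm → List Tm → Tm := List.foldl Tm.app

/-- `λx₁.…λxₖ.M`. -/
def lams : List ℕ → Tm → Tm := fun xs M => xs.foldr Tm.lam M

/-- `stepsN R n a b`: `a` reduces to `b` in exactly `n` `R`-steps. -/
def stepsN {α : Type*} (R : α → α → Prop) : ℕ → α → α → Prop
  | 0, a, b => a = b
  | n + 1, a, b => ∃ c, R a c ∧ stepsN R n c b

/-- `a` is an `R`-normal form. -/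
def NormalForm {α : Type*} (R : α → α → Prop) (a : α) : Prop := ¬ ∃ b, R a b

/-- First-order constructor terms over a signature with constructors
`c_0,…,c_{g-1}` (indices as naturals). -/
inductive CTm : Type
  | mk : ℕ → List CTm → CTm

/-- Well-formed constructor terms over the signature with `g` constructors of
arities `ar`. -/
inductive CTm.WFC (g : ℕ) (ar : Fin g → ℕ) : CTm → Prop
  | mk {i : ℕ} {ts : List CTm} (h : i < g) :
      ts.length = ar ⟨i, h⟩ → (∀ t ∈ ts, CTm.WFC g ar t) →
      CTm.WFC g ar (CTm.mk i ts)

/-- Scott encoding of constructor terms: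
`⌈cᵢ(t₁,…,tₙ)⌉ = λx₁…λx_g.λy. xᵢ ⌈t₁⌉…⌈tₙ⌉`. -/
def CTm.encode (g : ℕ) : CTm → Tm
  | .mk i ts =>
      lams (List.range (g + 1))
        (appList (.var i) (ts.attach.map fun t => CTm.encode g t.1))
termination_by t => sizeOf t
decreasing_by all_goals first
  | (simp_wf; have := List.sizeOf_lt_of_mem t.2; omega)
  | (simp_wf; omega)
  | simp_wf

/-- The error value `⊥ = λx₁…λx_g.λy.y`. -/
def errTm (g : ℕ) : Tm := lams (List.range (g + 1)) (.var g)

/-- The λ-term `⌈cᵢ⌉ = λx₁…λx_{ar i}.λy₁…λy_g.λz. yᵢ x₁ … x_{ar i}`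
computing the constructor `cᵢ`. -/
def encC (g : ℕ) (ar : Fin g → ℕ) (i : Fin g) : Tm :=
  lams (List.range' (g + 1) (ar i) ++ List.range (g + 1))
    (appList (.var i.val) ((List.range' (g + 1) (ar i)).map .var))

/-- Simultaneous (sequential, for closed replacements) substitution. -/
def substL (M : Tm) (xs : List ℕ) (Ns : List Tm) : Tm :=
  (xs.zip Ns).foldl (fun acc p => Tm.subst acc p.1 p.2) M

/-- The terms `CON^i_{x₁,…,x_m}` (free variables `x_t = g+1+t`), defined by
downward recursion on `ar i - m` (the first argument is the fuel
`ar i - m`): the base case is `λy₁…λy_g.λz.yᵢ x₁…x_{ar i}`, the step case is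
`λy. y N^m_{1,i} … N^m_{g,i} L^m_i` with
`N^m_{j,i} = λz₁…z_{ar j}.(λx_{m+1}.CON^i_{x₁,…,x_{m+1}}) CON^j_{z₁,…,z_{ar j}}`
and `L^m_i = λz_{m+2}…λz_{ar i}.⊥`. -/
def CONf (g : ℕ) (ar : Fin g → ℕ) : ℕ → Fin g → List ℕ → Tm
  | 0, i, xs => lams (List.range (g + 1)) (appList (.var i.val) (xs.map .var))
  | (k+1), i, xs =>
      Tm.lam (2 * (g + 2 + Finset.univ.sup ar) + 2)
        (appList (.var (2 * (g + 2 + Finset.univ.sup ar) + 2))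
          ((List.ofFn fun j : Fin g =>
              lams (List.range' (g + 2 + Finset.univ.sup ar) (ar j))
                (Tm.app
                  (Tm.lam (g + 1 + xs.length)
                    (CONf g ar k i (xs ++ [g + 1 + xs.length])))
                  (CONf g ar 0 j
                    (List.range' (g + 2 + Finset.univ.sup ar) (ar j))))) ++
            [lams (List.range' (g + 2 + Finset.univ.sup ar) (ar i - xs.length - 1))
              (errTm g)]))
termination_by k => k

/-- `CON^i_{x₁,…,x_m}` with the canonical variable names `x_t = g+1+t`. -/
def CON (g : ℕ) (ar : Fin g → ℕ) (i : Fin g) (m : ℕ) : Tm :=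
  CONf g ar (ar i - m) i ((List.range m).map (g + 1 + ·))

instance : Inhabited CTm := ⟨.mk 0 []⟩

/-!
Applied to a value `V`, the term `CON^i_{x₁,…,x_m}` (`m < ar i`) hands `V` the arms
`N_1, …, N_g, L`, each a closed value after at most one step. The Scott encoding then does the
case analysis: `⌈c_j(u⃗)⌉` selects `N_j`, which rebuilds `⌈c_j(u⃗)⌉` through `CON^j` and passes
it as `x_{m+1}` to `CON^i_{x₁,…,x_{m+1}}`, while `⊥` selects `L`, which swallows the remaining
`ar i - m - 1` arguments and returns `⊥`. Each round costs at most `2g + max ar + 4` steps and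
there are at most `max ar` rounds. Everything substituted along the way is closed, so the naive
substitution of the calculus never captures.
-/

namespace Tm

theorem subst_eq_self {M : Tm} {x : ℕ} (N : Tm) (h : x ∉ M.fv) : M.subst x N = M := by
  induction M with
  | var y => simp_all [subst, fv, eq_comm]
  | lam y P ih =>
    by_cases hyx : y = x
    · simp [subst, hyx]
    · simp only [fv, Finset.mem_sdiff, Finset.mem_singleton, not_and, not_not] at h
      simp [subst, hyx, ih fun hx => hyx (h hx).symm]
  | app P Q ihP ihQ => simp_all [subst, fv]

theorem fv_subst_subset (M : Tm) (x : ℕ) (N : Tm) :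
    (M.subst x N).fv ⊆ M.fv \ {x} ∪ N.fv := by
  induction M with
  | var y => by_cases h : y = x <;> simp [subst, fv, h]
  | lam y P ih =>
    by_cases h : y = x
    · simp [subst, fv, h]
    · simp only [subst, h, if_false, fv]
      intro a ha
      have := ih (Finset.mem_sdiff.1 ha).1
      simp only [Finset.mem_union, Finset.mem_sdiff, Finset.mem_singleton] at ha this ⊢
      tauto
  | app P Q ihP ihQ =>
    simp only [subst, fv, Finset.union_subset_iff]
    constructor
    · exact ihP.trans (by gcongr; simp)
    · exact ihQ.trans (by gcongr; simp)

theorem IsValue.subst {M : Tm} (hM : M.IsValue) (x : ℕ) {N : Tm} (hN : N.IsValue) :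
    (M.subst x N).IsValue := by
  cases M with
  | var y => by_cases h : y = x <;> simp_all [Tm.subst, IsValue]
  | lam y P => by_cases h : y = x <;> simp_all [Tm.subst, IsValue]
  | app => exact hM.elim

end Tm

open Tm

theorem appList_cons (M N : Tm) (l : List Tm) : appList M (N :: l) = appList (.app M N) l := rfl

theorem appList_append (M : Tm) (l₁ l₂ : List Tm) :
    appList M (l₁ ++ l₂) = appList (appList M l₁) l₂ := List.foldl_append ..

theorem fv_appList_subset {M : Tm} {l : List Tm} {s : Finset ℕ} (hM : M.fv ⊆ s)
    (hl : ∀ N ∈ l, N.fv ⊆ s) : (appList M l).fv ⊆ s := by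
  induction l generalizing M with
  | nil => exact hM
  | cons N l ih =>
    exact ih (Finset.union_subset hM (hl N (by simp))) fun P hP => hl P (by simp [hP])

theorem subst_appList (M : Tm) (l : List Tm) (x : ℕ) (N : Tm) :
    (appList M l).subst x N = appList (M.subst x N) (l.map (·.subst x N)) := by
  induction l generalizing M with
  | nil => rfl
  | cons P l ih => rw [appList_cons, ih]; rfl

theorem fv_lams (xs : List ℕ) (M : Tm) : (lams xs M).fv = M.fv \ xs.toFinset := by
  induction xs with
  | nil => simp [lams]
  | cons x xs ih =>
    change (lams xs M).fv \ {x} = _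
    rw [ih, sdiff_sdiff_left, List.toFinset_cons, Finset.insert_eq, Finset.union_comm]; rfl

theorem subst_lams {xs : List ℕ} (M : Tm) {x : ℕ} (N : Tm) (h : x ∉ xs) :
    (lams xs M).subst x N = lams xs (M.subst x N) := by
  induction xs with
  | nil => rfl
  | cons y ys ih =>
    simp only [List.mem_cons, not_or] at h
    simp only [lams, List.foldr_cons, subst, Ne.symm h.1, if_false, lam.injEq, true_and] at ih ⊢
    exact ih h.2

theorem Tm.IsValue.lams {M : Tm} (hM : M.IsValue) (xs : List ℕ) : (_root_.lams xs M).IsValue := by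
  cases xs with
  | nil => exact hM
  | cons => trivial

theorem isValue_lams_of_ne_nil {xs : List ℕ} (M : Tm) (hxs : xs ≠ []) :
    (lams xs M).IsValue := by
  cases xs
  · exact absurd rfl hxs
  · trivial

theorem substL_cons (M : Tm) (x : ℕ) (xs : List ℕ) (v : Tm) (vs : List Tm) :
    substL M (x :: xs) (v :: vs) = substL (M.subst x v) xs vs := rfl

theorem substL_append (M : Tm) {xs : List ℕ} (ys : List ℕ) {vs : List Tm} (ws : List Tm)
    (hlen : xs.length = vs.length) :
    substL M (xs ++ ys) (vs ++ ws) = substL (substL M xs vs) ys ws := by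
  rw [substL, List.zip_append hlen, List.foldl_append]; rfl

theorem substL_eq_self {M : Tm} {xs : List ℕ} (vs : List Tm) (h : ∀ x ∈ xs, x ∉ M.fv) :
    substL M xs vs = M := by
  have h' : ∀ p ∈ xs.zip vs, p.1 ∉ M.fv := fun p hp => h _ (List.of_mem_zip hp).1
  rw [substL]
  generalize xs.zip vs = ps at h'
  induction ps with
  | nil => rfl
  | cons p ps ih =>
    rw [List.foldl_cons, subst_eq_self _ (h' p (by simp))]
    exact ih fun q hq => h' q (by simp [hq])

theorem substL_of_closed {M : Tm} (xs : List ℕ) (vs : List Tm) (hM : M.Closed) :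
    substL M xs vs = M :=
  substL_eq_self vs fun _ _ hx => by rw [show M.fv = ∅ from hM] at hx; simp at hx

theorem fv_substL_subset (M : Tm) {xs : List ℕ} {vs : List Tm} (hlen : xs.length ≤ vs.length)
    (hvs : ∀ v ∈ vs, v.Closed) : (substL M xs vs).fv ⊆ M.fv \ xs.toFinset := by
  have hps : ∀ p ∈ xs.zip vs, p.2.Closed := fun p hp => hvs _ (List.of_mem_zip hp).2
  rw [substL]
  conv_rhs => rw [← List.map_fst_zip hlen]
  generalize xs.zip vs = ps at hps
  induction ps generalizing M with
  | nil => simp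
  | cons p ps ih =>
    refine (ih _ fun q hq => hps q (by simp [hq])).trans ?_
    have hsub := fv_subst_subset M p.1 p.2
    rw [hps p (by simp), Finset.union_empty] at hsub
    intro a ha
    simp only [Finset.mem_sdiff, List.mem_toFinset, List.map_cons, List.mem_cons] at ha ⊢
    have := hsub ha.1
    simp only [Finset.mem_sdiff, Finset.mem_singleton] at this
    tauto

theorem substL_lams (ys : List ℕ) (M : Tm) {xs : List ℕ} (vs : List Tm)
    (h : ∀ x ∈ xs, x ∉ ys) : substL (lams ys M) xs vs = lams ys (substL M xs vs) := by
  have h' : ∀ p ∈ xs.zip vs, p.1 ∉ ys := fun p hp => h _ (List.of_mem_zip hp).1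
  rw [substL, substL]
  generalize xs.zip vs = ps at h'
  induction ps generalizing M with
  | nil => rfl
  | cons p ps ih =>
    rw [List.foldl_cons, List.foldl_cons, subst_lams _ _ (h' p (by simp))]
    exact ih _ fun q hq => h' q (by simp [hq])

theorem substL_lam (y : ℕ) (M : Tm) {xs : List ℕ} (vs : List Tm) (h : y ∉ xs) :
    substL (.lam y M) xs vs = .lam y (substL M xs vs) :=
  substL_lams [y] M vs fun _ hx hxy => h (List.mem_singleton.1 hxy ▸ hx)

theorem substL_app (M N : Tm) (xs : List ℕ) (vs : List Tm) :
    substL (.app M N) xs vs = .app (substL M xs vs) (substL N xs vs) := by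
  rw [substL, substL, substL]
  generalize xs.zip vs = ps
  induction ps generalizing M N with
  | nil => rfl
  | cons p ps ih => exact ih _ _

theorem substL_appList (M : Tm) (l : List Tm) (xs : List ℕ) (vs : List Tm) :
    substL (appList M l) xs vs = appList (substL M xs vs) (l.map (substL · xs vs)) := by
  induction l generalizing M with
  | nil => rfl
  | cons N l ih => rw [appList_cons, ih, substL_app]; rfl

theorem Tm.IsValue.substL {M : Tm} (hM : M.IsValue) (xs : List ℕ) {vs : List Tm}
    (hvs : ∀ v ∈ vs, v.IsValue) : (substL M xs vs).IsValue := by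
  have hps : ∀ p ∈ xs.zip vs, p.2.IsValue := fun p hp => hvs _ (List.of_mem_zip hp).2
  rw [_root_.substL]
  generalize xs.zip vs = ps at hps
  induction ps generalizing M with
  | nil => exact hM
  | cons p ps ih => exact ih (hM.subst _ (hps p (by simp))) fun q hq => hps q (by simp [hq])

theorem substL_var_getElem {xs : List ℕ} {vs : List Tm} (hxs : xs.Nodup)
    (hlen : xs.length = vs.length) (hvs : ∀ v ∈ vs, v.Closed) (p : ℕ) (hp : p < xs.length) :
    substL (.var xs[p]) xs vs = vs[p] := by
  induction xs generalizing vs p with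
  | nil => simp at hp
  | cons x xs ih =>
    obtain _ | ⟨v, vs⟩ := vs
    · simp at hlen
    rw [substL_cons]
    cases p with
    | zero => simp [subst, substL_of_closed _ _ (hvs v (by simp))]
    | succ p =>
      have hp : p < xs.length := by simpa using hp
      have hne : xs[p] ≠ x := fun h => (List.nodup_cons.1 hxs).1 (h ▸ List.getElem_mem _)
      simp only [List.getElem_cons_succ, subst, hne, if_false]
      exact ih (List.nodup_cons.1 hxs).2 (by simpa using hlen)
        (fun w hw => hvs w (by simp [hw])) p hp

theorem substL_appList_map_var {M : Tm} {xs : List ℕ} {vs : List Tm}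
    (hM : ∀ x ∈ xs, x ∉ M.fv) (hxs : xs.Nodup) (hlen : xs.length = vs.length)
    (hvs : ∀ v ∈ vs, v.Closed) :
    substL (appList M (xs.map .var)) xs vs = appList M vs := by
  rw [substL_appList, substL_eq_self vs hM]
  congr 1
  refine List.ext_getElem (by simp [hlen]) fun p h₁ _ => ?_
  simp only [List.getElem_map]
  exact substL_var_getElem hxs hlen hvs p (by simpa using h₁)

theorem substL_var_range {n : ℕ} {Vs : List Tm} (hVs : ∀ V ∈ Vs, V.Closed)
    (hlen : Vs.length = n) (j : ℕ) (hj : j < n) :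
    substL (.var j) (List.range n) Vs = Vs[j]'(hlen ▸ hj) := by
  have h := substL_var_getElem (xs := List.range n) List.nodup_range (by simp [hlen]) hVs j
    (by simpa)
  rwa [List.getElem_range] at h

theorem List.forall₂_ofFn {α β : Type*} {R : α → β → Prop} {n : ℕ} {f : Fin n → α}
    {f' : Fin n → β} (h : ∀ j, R (f j) (f' j)) :
    List.Forall₂ R (List.ofFn f) (List.ofFn f') :=
  List.forall₂_of_length_eq_of_get (by simp) fun i h₁ _ => by
    simpa using h ⟨i, by simpa using h₁⟩

theorem List.forall₂_drop_of_getD {α β : Type*} {R : α → β → Prop} {Xs : List α}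
    {ts : List β} {m : ℕ} (a : α) (b : β) (hlen : Xs.length = ts.length - m)
    (h : ∀ p < Xs.length, R (Xs.getD p a) (ts.getD (m + p) b)) : Forall₂ R Xs (ts.drop m) :=
  forall₂_of_length_eq_of_get (by simp [hlen]) fun p h₁ h₂ => by
    have := h p h₁
    rw [getD_eq_getElem _ _ h₁, getD_eq_getElem _ _ (by rw [List.length_drop] at h₂; omega)] at this
    simpa using this

theorem stepsN_add {α : Type*} {R : α → α → Prop} {m n : ℕ} {a b c : α}
    (hab : stepsN R m a b) (hbc : stepsN R n b c) : stepsN R (m + n) a c := by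
  induction m generalizing a with
  | zero => cases hab; simpa using hbc
  | succ m ih =>
    obtain ⟨d, had, hdb⟩ := hab
    rw [Nat.add_right_comm]
    exact ⟨d, had, ih hdb⟩

theorem stepsN_map {α : Type*} {R : α → α → Prop} (f : α → α)
    (hf : ∀ a b, R a b → R (f a) (f b)) {n : ℕ} {a b : α} (h : stepsN R n a b) :
    stepsN R n (f a) (f b) := by
  induction n generalizing a with
  | zero => exact congrArg f h
  | succ n ih =>
    obtain ⟨c, hac, hcb⟩ := h
    exact ⟨f c, hf a c hac, ih hcb⟩

def RedLe (n : ℕ) (M N : Tm) : Prop := ∃ k ≤ n, stepsN Cbv k M N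

namespace RedLe

theorem refl (n : ℕ) (M : Tm) : RedLe n M M := ⟨0, n.zero_le, rfl⟩

theorem mono {m n : ℕ} {M N : Tm} (h : RedLe m M N) (hmn : m ≤ n) : RedLe n M N :=
  let ⟨k, hk, hs⟩ := h
  ⟨k, hk.trans hmn, hs⟩

theorem trans {m n : ℕ} {L M N : Tm} (h₁ : RedLe m L M) (h₂ : RedLe n M N) :
    RedLe (m + n) L N :=
  let ⟨k₁, hk₁, hs₁⟩ := h₁
  let ⟨k₂, hk₂, hs₂⟩ := h₂
  ⟨k₁ + k₂, Nat.add_le_add hk₁ hk₂, stepsN_add hs₁ hs₂⟩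

theorem single {M N : Tm} (h : Cbv M N) : RedLe 1 M N := ⟨1, le_rfl, N, h, rfl⟩

theorem beta {x : ℕ} {M V : Tm} (hV : V.IsValue) : RedLe 1 (.app (.lam x M) V) (M.subst x V) :=
  single (.beta hV)

theorem appList_left {n : ℕ} {M N : Tm} (l : List Tm) (h : RedLe n M N) :
    RedLe n (appList M l) (appList N l) := by
  obtain ⟨k, hk, hs⟩ := h
  refine ⟨k, hk, stepsN_map (appList · l) (fun a b hab => ?_) hs⟩
  induction l generalizing a b with
  | nil => exact hab
  | cons P l ih => exact ih _ _ (.appL hab)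

theorem app_right {n : ℕ} (L : Tm) {M N : Tm} (h : RedLe n M N) : RedLe n (.app L M) (.app L N) :=
  let ⟨k, hk, hs⟩ := h
  ⟨k, hk, stepsN_map _ (fun _ _ => .appR) hs⟩

theorem appList_right {n : ℕ} (M : Tm) {l₁ l₂ : List Tm}
    (h : List.Forall₂ (RedLe n) l₁ l₂) :
    RedLe (n * l₁.length) (appList M l₁) (appList M l₂) := by
  induction h generalizing M with
  | nil => exact refl _ _
  | @cons N₁ N₂ l₁ l₂ hN _ ih =>
    rw [appList_cons, appList_cons, List.length_cons, Nat.mul_succ, Nat.add_comm]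
    exact (appList_left l₁ (app_right M hN)).trans (ih _)

theorem beta_lams {xs : List ℕ} (B : Tm) {vs : List Tm} (hxs : xs.Nodup)
    (hlen : xs.length = vs.length) (hvs : ∀ v ∈ vs, v.IsValue) :
    RedLe xs.length (appList (lams xs B) vs) (substL B xs vs) := by
  induction xs generalizing B vs with
  | nil => cases vs with
    | nil => exact refl _ _
    | cons => simp at hlen
  | cons x xs ih =>
    obtain _ | ⟨v, vs⟩ := vs
    · simp at hlen
    have hstep := appList_left vs (beta (x := x) (M := lams xs B) (hvs v (by simp)))
    rw [subst_lams _ _ (List.nodup_cons.1 hxs).1] at hstep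
    rw [List.length_cons, Nat.add_comm]
    exact hstep.trans (ih _ (List.nodup_cons.1 hxs).2 (by simpa using hlen)
      fun w hw => hvs w (by simp [hw]))

end RedLe

section Scott

variable (g : ℕ)

theorem encode_mk (i : ℕ) (ts : List CTm) :
    CTm.encode g (.mk i ts) =
      lams (List.range (g + 1)) (appList (.var i) (ts.map (CTm.encode g))) := by
  rw [CTm.encode]; simp

theorem isValue_encode (t : CTm) : (CTm.encode g t).IsValue := by
  cases t; rw [encode_mk]; exact isValue_lams_of_ne_nil _ (by simp)

theorem isValue_errTm : (errTm g).IsValue := isValue_lams_of_ne_nil _ (by simp)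

theorem closed_errTm : (errTm g).Closed := by
  simp [Closed, errTm, fv_lams, fv]

theorem closed_encode {ar : Fin g → ℕ} {t : CTm} (ht : t.WFC g ar) :
    (CTm.encode g t).Closed := by
  induction ht with
  | @mk i ts hi _ _ ih =>
    rw [Closed, encode_mk, fv_lams, Finset.sdiff_eq_empty_iff_subset]
    have hi : ({i} : Finset ℕ) ⊆ (List.range (g + 1)).toFinset := by
      rw [Finset.singleton_subset_iff, List.mem_toFinset, List.mem_range]; omega
    refine fv_appList_subset hi fun N hN => ?_
    obtain ⟨u, hu, rfl⟩ := List.mem_map.1 hN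
    simp [show (CTm.encode g u).fv = ∅ from ih u hu]

variable {g}

theorem RedLe.encode_appList {f : Fin g → Tm} {L : Tm}
    (hVs : ∀ V ∈ List.ofFn f ++ [L], V.Closed ∧ V.IsValue) (j : Fin g) {us : List CTm}
    (hus : ∀ u ∈ us, (CTm.encode g u).Closed) :
    RedLe (g + 1) (appList (CTm.encode g (.mk j us)) (List.ofFn f ++ [L]))
      (appList (f j) (us.map (CTm.encode g))) := by
  have hred := RedLe.beta_lams (appList (.var j) (us.map (CTm.encode g)))
    (xs := List.range (g + 1)) (vs := List.ofFn f ++ [L]) List.nodup_range (by simp)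
    fun V hV => (hVs V hV).2
  rw [List.length_range, substL_appList, substL_var_range (n := g + 1) (fun V hV => (hVs V hV).1)
    (by simp) j (by omega), List.map_map] at hred
  rw [encode_mk]
  convert hred using 2
  · simp [List.getElem_append_left]
  · exact List.map_congr_left fun u hu => (substL_of_closed _ _ (hus u hu)).symm

theorem RedLe.errTm_appList {f : Fin g → Tm} {L : Tm}
    (hVs : ∀ V ∈ List.ofFn f ++ [L], V.Closed ∧ V.IsValue) :
    RedLe (g + 1) (appList (errTm g) (List.ofFn f ++ [L])) L := by
  have hred := RedLe.beta_lams (.var g) (xs := List.range (g + 1)) (vs := List.ofFn f ++ [L])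
    List.nodup_range (by simp) fun V hV => (hVs V hV).2
  rw [List.length_range, substL_var_range (n := g + 1) (fun V hV => (hVs V hV).1) (by simp) g
    (by omega)] at hred
  rwa [List.getElem_append_right (by simp), List.getElem_singleton] at hred

end Scott

section CON

variable (g : ℕ) (ar : Fin g → ℕ)

/-- Binders of the arms, above every `x_t = g + 1 + t` (`t ≤ max ar`), so that substituting for
the `x_t` never meets them. -/
def zVars (n : ℕ) : List ℕ := List.range' (g + 2 + Finset.univ.sup ar) n

def armTm (P : Tm) (j : Fin g) : Tm :=
  lams (zVars g ar (ar j)) (.app P (CONf g ar 0 j (zVars g ar (ar j))))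

def errArm (n : ℕ) : Tm := lams (zVars g ar n) (errTm g)

/-- The paper's `λy. y N^m_{1,i} … N^m_{g,i} L^m_i`, with `N^m_{j,i} = armTm g ar P j` and
`L^m_i = errArm g ar (ar i - m - 1)` for `P = λx_{m+1}.CON^i_{x₁,…,x_{m+1}}`. -/
def caseTm (P : Tm) (n : ℕ) : Tm :=
  .lam (2 * (g + 2 + Finset.univ.sup ar) + 2)
    (appList (.var (2 * (g + 2 + Finset.univ.sup ar) + 2))
      (List.ofFn (armTm g ar P) ++ [errArm g ar n]))

theorem length_zVars (n : ℕ) : (zVars g ar n).length = n := List.length_range' ..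

theorem nodup_zVars (n : ℕ) : (zVars g ar n).Nodup := List.nodup_range'

theorem zVars_eq_nil (n : ℕ) : zVars g ar n = [] ↔ n = 0 := List.range'_eq_nil_iff

theorem mem_zVars {n x : ℕ} :
    x ∈ zVars g ar n ↔ g + 2 + Finset.univ.sup ar ≤ x ∧ x < g + 2 + Finset.univ.sup ar + n :=
  List.mem_range'_1

theorem CONf_zero (i : Fin g) (xs : List ℕ) :
    CONf g ar 0 i xs = lams (List.range (g + 1)) (appList (.var i) (xs.map .var)) := by
  rw [CONf]

theorem CONf_succ (k : ℕ) (i : Fin g) (xs : List ℕ) :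
    CONf g ar (k + 1) i xs = caseTm g ar
      (.lam (g + 1 + xs.length) (CONf g ar k i (xs ++ [g + 1 + xs.length])))
      (ar i - xs.length - 1) := by
  rw [CONf]; rfl

theorem isValue_CONf (k : ℕ) (i : Fin g) (xs : List ℕ) : (CONf g ar k i xs).IsValue := by
  cases k
  · rw [CONf_zero]; exact isValue_lams_of_ne_nil _ (by simp)
  · rw [CONf_succ]; trivial

theorem fv_CONf_zero_subset (i : Fin g) (xs : List ℕ) :
    (CONf g ar 0 i xs).fv ⊆ xs.toFinset := by
  rw [CONf_zero, fv_lams]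
  intro a ha
  obtain ⟨ha, hna⟩ := Finset.mem_sdiff.1 ha
  have hsub : (appList (.var i) (xs.map .var)).fv ⊆ insert (i : ℕ) xs.toFinset :=
    fv_appList_subset (by simp [fv]) fun N hN => by
      obtain ⟨x, hx, rfl⟩ := List.mem_map.1 hN
      simp [fv, hx]
  rcases Finset.mem_insert.1 (hsub ha) with rfl | h
  · simp at hna
  · exact h

theorem substL_CONf_zero (i : Fin g) {xs : List ℕ} {us : List CTm} (hxs : xs.Nodup)
    (hg : ∀ x ∈ xs, g < x) (hlen : xs.length = us.length)
    (hus : ∀ u ∈ us, (CTm.encode g u).Closed) :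
    substL (CONf g ar 0 i xs) xs (us.map (CTm.encode g)) = CTm.encode g (.mk i us) := by
  rw [CONf_zero, encode_mk, substL_lams _ _ _ fun x hx h => by
    have := hg x hx; rw [List.mem_range] at h; omega]
  rw [substL_appList_map_var (fun x hx h => by
    have := hg x hx; rw [fv, Finset.mem_singleton] at h; omega) hxs
    (by simpa using hlen) (by simpa using hus)]

theorem closed_errArm (n : ℕ) : (errArm g ar n).Closed := by
  rw [Closed, errArm, fv_lams, show (errTm g).fv = ∅ from closed_errTm g, Finset.empty_sdiff]

theorem fv_armTm_subset (P : Tm) (j : Fin g) : (armTm g ar P j).fv ⊆ P.fv := by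
  rw [armTm, fv_lams]
  intro a ha
  obtain ⟨ha, hna⟩ := Finset.mem_sdiff.1 ha
  rcases Finset.mem_union.1 ha with h | h
  · exact h
  · exact absurd (fv_CONf_zero_subset g ar j _ h) hna

theorem fv_caseTm_subset (P : Tm) (n : ℕ) : (caseTm g ar P n).fv ⊆ P.fv := by
  intro a ha
  obtain ⟨ha, hna⟩ := Finset.mem_sdiff.1 ha
  have := fv_appList_subset (s := insert (2 * (g + 2 + Finset.univ.sup ar) + 2) P.fv)
    (by simp [fv]) (fun N hN => ?_) ha
  · exact (Finset.mem_insert.1 this).resolve_left (by simpa using hna)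
  rcases List.mem_append.1 hN with hN | hN
  · obtain ⟨j, rfl⟩ := List.mem_ofFn.1 hN
    exact (fv_armTm_subset g ar P j).trans (Finset.subset_insert _ _)
  · rw [List.mem_singleton.1 hN, show (errArm g ar n).fv = ∅ from closed_errArm g ar n]
    exact Finset.empty_subset _

theorem fv_CONf_subset (k : ℕ) (i : Fin g) (xs : List ℕ) :
    (CONf g ar k i xs).fv ⊆ xs.toFinset := by
  induction k generalizing xs with
  | zero => exact fv_CONf_zero_subset g ar i xs
  | succ k ih =>
    rw [CONf_succ]
    refine (fv_caseTm_subset g ar _ _).trans fun a ha => ?_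
    obtain ⟨ha, hna⟩ := Finset.mem_sdiff.1 ha
    have := ih _ ha
    simp only [List.toFinset_append, Finset.mem_union, List.mem_toFinset, List.toFinset_cons,
      List.toFinset_nil, insert_empty_eq, Finset.mem_singleton] at this hna ⊢
    tauto

theorem substL_caseTm (P : Tm) (n : ℕ) {xs : List ℕ} (vs : List Tm)
    (hxs : ∀ x ∈ xs, x < g + 2 + Finset.univ.sup ar) :
    substL (caseTm g ar P n) xs vs = caseTm g ar (substL P xs vs) n := by
  have hz : ∀ k, ∀ x ∈ xs, x ∉ zVars g ar k := fun k x hx h => by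
    have := hxs x hx; rw [mem_zVars] at h; omega
  rw [caseTm, substL_lam _ _ _ fun h => by have := hxs _ h; omega, substL_appList,
    substL_eq_self _ fun x hx h => by have := hxs x hx; rw [fv, Finset.mem_singleton] at h; omega,
    caseTm,
    List.map_append, List.map_ofFn, List.map_singleton,
    substL_of_closed _ _ (closed_errArm g ar n)]
  congr 4
  funext j
  rw [Function.comp_apply, armTm, armTm, substL_lams _ _ _ (hz _), substL_app,
    substL_eq_self (M := CONf g ar 0 j _) _ fun x hx h =>
      hz _ x hx (by simpa using fv_CONf_zero_subset g ar j _ h)]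

/-- What the arm `armTm g ar (.lam x B) j` evaluates to as an argument: for `ar j = 0` it has no
binders and is itself a β-redex. -/
def armVal (x : ℕ) (B : Tm) (j : Fin g) : Tm :=
  if ar j = 0 then B.subst x (CONf g ar 0 j []) else armTm g ar (.lam x B) j

theorem RedLe.armTm_armVal (x : ℕ) (B : Tm) (j : Fin g) :
    RedLe 1 (armTm g ar (.lam x B) j) (armVal g ar x B j) := by
  unfold armVal
  split_ifs with h
  · rw [armTm, h, (zVars_eq_nil g ar 0).2 rfl]
    exact RedLe.beta (isValue_CONf g ar 0 j _)
  · exact RedLe.refl 1 _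

theorem closed_armVal {x : ℕ} {B : Tm} (hP : (Tm.lam x B).Closed) (j : Fin g) :
    (armVal g ar x B j).Closed := by
  unfold armVal
  split_ifs
  · refine Finset.subset_empty.1 ((fv_subst_subset B x _).trans ?_)
    rw [show B.fv \ {x} = ∅ from hP, Finset.empty_union]
    simpa using fv_CONf_zero_subset g ar j []
  · exact Finset.subset_empty.1 ((fv_armTm_subset g ar _ j).trans hP.subset)

theorem isValue_armVal (x : ℕ) {B : Tm} (hB : B.IsValue) (j : Fin g) :
    (armVal g ar x B j).IsValue := by
  unfold armVal
  split_ifs with h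
  · exact hB.subst x (isValue_CONf g ar 0 j [])
  · exact isValue_lams_of_ne_nil _ (by rwa [Ne, zVars_eq_nil])

theorem RedLe.armVal_appList {x : ℕ} {B : Tm} (hP : (Tm.lam x B).Closed) (j : Fin g)
    {us : List CTm} (hlen : us.length = ar j) (hus : ∀ u ∈ us, (CTm.encode g u).Closed) :
    RedLe (ar j + 1) (appList (armVal g ar x B j) (us.map (CTm.encode g)))
      (B.subst x (CTm.encode g (.mk j us))) := by
  unfold armVal
  split_ifs with h
  · obtain rfl : us = [] := List.eq_nil_of_length_eq_zero (hlen.trans h)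
    rw [← substL_CONf_zero g ar j (xs := []) List.nodup_nil (by simp) rfl (by simp)]
    exact RedLe.refl _ _
  · have hred := RedLe.beta_lams (.app (.lam x B) (CONf g ar 0 j (zVars g ar (ar j))))
      (vs := us.map (CTm.encode g)) (nodup_zVars g ar (ar j)) (by simp [length_zVars, hlen])
      fun v hv => by
        obtain ⟨u, -, rfl⟩ := List.mem_map.1 hv; exact isValue_encode g u
    rw [length_zVars, substL_app, substL_of_closed _ _ hP,
      substL_CONf_zero g ar j (xs := zVars g ar (ar j)) (nodup_zVars g ar _)
        (fun _ hx => by rw [mem_zVars] at hx; omega)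
        (by rw [length_zVars, hlen]) hus] at hred
    exact hred.trans (RedLe.beta (isValue_encode g _))

theorem RedLe.caseTm_cons {x : ℕ} {B : Tm} (hP : (Tm.lam x B).Closed) {X : Tm}
    (hX : X.IsValue) (n : ℕ) (rest : List Tm) :
    RedLe (g + 2) (appList (caseTm g ar (.lam x B) n) (X :: rest))
      (appList X ((List.ofFn (armVal g ar x B) ++ [errArm g ar n]) ++ rest)) := by
  have hclosed : ∀ N ∈ List.ofFn (armTm g ar (.lam x B)) ++ [errArm g ar n], N.Closed := by
    simp only [List.mem_append, List.mem_ofFn, List.mem_singleton]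
    rintro N (⟨j, rfl⟩ | rfl)
    · exact Finset.subset_empty.1 ((fv_armTm_subset g ar _ j).trans hP.subset)
    · exact closed_errArm g ar n
  have hbeta := RedLe.beta (x := 2 * (g + 2 + Finset.univ.sup ar) + 2)
    (M := appList (.var (2 * (g + 2 + Finset.univ.sup ar) + 2))
      (List.ofFn (armTm g ar (.lam x B)) ++ [errArm g ar n])) hX
  rw [subst_appList, List.map_congr_left fun N hN => subst_eq_self X
    (by rw [show N.fv = ∅ from hclosed N hN]; simp), List.map_id', Tm.subst, if_pos rfl] at hbeta
  have hargs := RedLe.appList_right X (List.rel_append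
    (List.forall₂_ofFn (RedLe.armTm_armVal g ar x B)) (.cons (RedLe.refl 1 (errArm g ar n)) .nil))
  rw [appList_cons, appList_append]
  refine ((RedLe.appList_left rest hbeta).trans (RedLe.appList_left rest hargs)).mono ?_
  simp only [List.length_append, List.length_ofFn, List.length_singleton, one_mul]; omega

theorem closed_isValue_armVals {x : ℕ} {B : Tm} (hP : (Tm.lam x B).Closed) (hB : B.IsValue)
    (n : ℕ) :
    ∀ V ∈ List.ofFn (armVal g ar x B) ++ [errArm g ar n], V.Closed ∧ V.IsValue := by
  simp only [List.mem_append, List.mem_ofFn, List.mem_singleton]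
  rintro V (⟨j, rfl⟩ | rfl)
  · exact ⟨closed_armVal g ar hP j, isValue_armVal g ar x hB j⟩
  · exact ⟨closed_errArm g ar n, (isValue_errTm g).lams _⟩

theorem RedLe.caseTm_encode {x : ℕ} {B : Tm} (hP : (Tm.lam x B).Closed) (hB : B.IsValue)
    (n : ℕ) (j : Fin g) {us : List CTm} (hlen : us.length = ar j)
    (hus : ∀ u ∈ us, (CTm.encode g u).Closed) (rest : List Tm) :
    RedLe (2 * g + ar j + 4) (appList (caseTm g ar (.lam x B) n) (CTm.encode g (.mk j us) :: rest))
      (appList (B.subst x (CTm.encode g (.mk j us))) rest) := by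
  have hcase := RedLe.caseTm_cons g ar hP (isValue_encode g (.mk j us)) n rest
  rw [appList_append] at hcase
  have hselect := RedLe.encode_appList (closed_isValue_armVals g ar hP hB n) j hus
  have harm := RedLe.armVal_appList g ar hP j hlen hus
  refine (hcase.trans (RedLe.appList_left rest (hselect.trans harm))).mono ?_
  omega

theorem RedLe.caseTm_errTm {x : ℕ} {B : Tm} (hP : (Tm.lam x B).Closed) (hB : B.IsValue)
    {rest : List Tm} (hrest : ∀ V ∈ rest, V.IsValue) :
    RedLe (2 * g + rest.length + 3) (appList (caseTm g ar (.lam x B) rest.length) (errTm g :: rest))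
      (errTm g) := by
  have hcase := RedLe.caseTm_cons g ar hP (isValue_errTm g) rest.length rest
  rw [appList_append] at hcase
  have herr := RedLe.beta_lams (errTm g) (nodup_zVars g ar rest.length)
    (length_zVars g ar _) hrest
  rw [length_zVars, substL_of_closed _ _ (closed_errTm g)] at herr
  refine (hcase.trans ((RedLe.appList_left rest (RedLe.errTm_appList
    (closed_isValue_armVals g ar hP hB _))).trans herr)).mono ?_
  omega

def xVars (m : ℕ) : List ℕ := List.range' (g + 1) m

theorem map_range_eq_xVars (m : ℕ) : (List.range m).map (g + 1 + ·) = xVars g m := by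
  rw [xVars, List.range'_eq_map_range]

theorem length_xVars (m : ℕ) : (xVars g m).length = m := List.length_range' ..

theorem nodup_xVars (m : ℕ) : (xVars g m).Nodup := List.nodup_range'

theorem mem_xVars {m x : ℕ} : x ∈ xVars g m ↔ g + 1 ≤ x ∧ x < g + 1 + m :=
  List.mem_range'_1

theorem xVars_succ (m : ℕ) : xVars g (m + 1) = xVars g m ++ [g + 1 + m] :=
  List.range'_1_concat ..

theorem substL_CONf_succ (k : ℕ) (i : Fin g) {m : ℕ} (vs : List Tm)
    (hm : m ≤ Finset.univ.sup ar + 1) :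
    substL (CONf g ar (k + 1) i (xVars g m)) (xVars g m) vs =
      caseTm g ar (.lam (g + 1 + m) (substL (CONf g ar k i (xVars g (m + 1))) (xVars g m) vs))
        (ar i - m - 1) := by
  rw [CONf_succ, length_xVars, ← xVars_succ, substL_caseTm g ar _ _ _ fun x hx => by
    rw [mem_xVars] at hx; omega, substL_lam _ _ _ fun hx => by rw [mem_xVars] at hx; omega]

theorem closed_lam_substL_CONf (k : ℕ) (i : Fin g) {vs : List Tm} (hvs : ∀ v ∈ vs, v.Closed) :
    (Tm.lam (g + 1 + vs.length)
      (substL (CONf g ar k i (xVars g (vs.length + 1))) (xVars g vs.length) vs)).Closed := by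
  refine Finset.sdiff_eq_empty_iff_subset.2 fun a ha => ?_
  obtain ⟨ha, hm⟩ := Finset.mem_sdiff.1 (fv_substL_subset _ (by simp [length_xVars]) hvs ha)
  have := fv_CONf_subset g ar k i _ ha
  simp only [List.mem_toFinset, mem_xVars] at this hm
  rw [Finset.mem_singleton]
  omega

theorem subst_substL_xVars (M : Tm) {vs : List Tm} (v : Tm) :
    (substL M (xVars g vs.length) vs).subst (g + 1 + vs.length) v =
      substL M (xVars g (vs.length + 1)) (vs ++ [v]) := by
  rw [xVars_succ, substL_append _ _ _ (length_xVars g _)]; rfl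

theorem RedLe.CONf_succ_encode (k : ℕ) (i : Fin g) {vs : List Tm}
    (hm : vs.length ≤ Finset.univ.sup ar + 1) (hvs : ∀ v ∈ vs, v.Closed ∧ v.IsValue)
    {t : CTm} (ht : t.WFC g ar) (rest : List Tm) :
    RedLe (2 * g + Finset.univ.sup ar + 4)
      (appList (substL (CONf g ar (k + 1) i (xVars g vs.length)) (xVars g vs.length) vs)
        (CTm.encode g t :: rest))
      (appList (substL (CONf g ar k i (xVars g (vs.length + 1))) (xVars g (vs.length + 1))
        (vs ++ [CTm.encode g t])) rest) := by
  obtain ⟨hj, hlen, hts⟩ := ht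
  rw [substL_CONf_succ g ar k i vs hm, ← subst_substL_xVars]
  refine (RedLe.caseTm_encode g ar (closed_lam_substL_CONf g ar k i fun v hv => (hvs v hv).1)
    ((isValue_CONf g ar k i _).substL _ fun v hv => (hvs v hv).2) _ ⟨_, hj⟩ hlen
    (fun u hu => closed_encode g (hts u hu)) rest).mono ?_
  have := Finset.le_sup (f := ar) (Finset.mem_univ ⟨_, hj⟩)
  omega

theorem RedLe.CONf_succ_errTm (i : Fin g) {vs : List Tm}
    (hvs : ∀ v ∈ vs, v.Closed ∧ v.IsValue) {rest : List Tm}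
    (hlen : vs.length + rest.length + 1 = ar i)
    (hrest : ∀ V ∈ rest, V.IsValue) :
    RedLe (2 * g + Finset.univ.sup ar + 4)
      (appList (substL (CONf g ar (rest.length + 1) i (xVars g vs.length)) (xVars g vs.length) vs)
        (errTm g :: rest)) (errTm g) := by
  have hS := Finset.le_sup (f := ar) (Finset.mem_univ i)
  rw [substL_CONf_succ g ar _ i vs (by omega), show ar i - vs.length - 1 = rest.length by omega]
  refine (RedLe.caseTm_errTm g ar (closed_lam_substL_CONf g ar _ i fun v hv => (hvs v hv).1)
    ((isValue_CONf g ar _ i _).substL _ fun v hv => (hvs v hv).2) hrest).mono ?_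
  omega

theorem RedLe.CONf_encode (i : Fin g) (us ts : List CTm) (hlen : us.length + ts.length = ar i)
    (hus : ∀ u ∈ us, u.WFC g ar) (hts : ∀ t ∈ ts, t.WFC g ar) :
    RedLe (ts.length * (2 * g + Finset.univ.sup ar + 4))
      (appList (substL (CONf g ar ts.length i (xVars g us.length)) (xVars g us.length)
        (us.map (CTm.encode g))) (ts.map (CTm.encode g)))
      (CTm.encode g (.mk i (us ++ ts))) := by
  have hS := Finset.le_sup (f := ar) (Finset.mem_univ i)
  induction ts generalizing us with
  | nil =>
    rw [List.append_nil, ← substL_CONf_zero g ar i (nodup_xVars g _)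
      (fun x hx => by rw [mem_xVars] at hx; omega) (length_xVars g _)
      fun u hu => closed_encode g (hus u hu)]
    exact RedLe.refl _ _
  | cons t ts ih =>
    have hstep := RedLe.CONf_succ_encode g ar ts.length i (vs := us.map (CTm.encode g))
      (by simp only [List.length_cons, List.length_map] at hlen ⊢; omega) (fun v hv => by
        obtain ⟨u, hu, rfl⟩ := List.mem_map.1 hv
        exact ⟨closed_encode g (hus u hu), isValue_encode g u⟩) (hts t (by simp))
      (ts.map (CTm.encode g))
    rw [List.length_map] at hstep
    have hrest := ih (us ++ [t])
      (by rw [List.length_cons] at hlen; rw [List.length_append, List.length_singleton]; omega)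
      (by simpa [or_imp, forall_and] using ⟨hus, hts t (by simp)⟩)
      fun t ht => hts t (by simp [ht])
    rw [List.map_append, List.map_singleton, List.length_append, List.length_singleton,
      List.append_assoc, List.singleton_append] at hrest
    refine (hstep.trans hrest).mono (le_of_eq ?_)
    rw [List.length_cons]; ring

theorem RedLe.CONf_errTm (i : Fin g) {vs : List Tm} (hvs : ∀ v ∈ vs, v.Closed ∧ v.IsValue)
    {Xs : List Tm} {ts : List CTm}
    (hXs : List.Forall₂ (fun X t => X = errTm g ∨ X = CTm.encode g t) Xs ts)
    (hlen : vs.length + ts.length = ar i) (hts : ∀ t ∈ ts, t.WFC g ar) (herr : errTm g ∈ Xs) :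
    RedLe (ts.length * (2 * g + Finset.univ.sup ar + 4))
      (appList (substL (CONf g ar ts.length i (xVars g vs.length)) (xVars g vs.length) vs) Xs)
      (errTm g) := by
  have hS := Finset.le_sup (f := ar) (Finset.mem_univ i)
  induction hXs generalizing vs with
  | nil => simp at herr
  | @cons X t Xs ts hXt hXs ih =>
    rw [List.length_cons] at hlen ⊢
    by_cases hX : X = errTm g
    · subst hX
      have hvals : ∀ V ∈ Xs, V.IsValue := ((List.forall₂_and_left _ _).1 (hXs.imp fun V u h =>
        ⟨h.elim (· ▸ isValue_errTm g) (· ▸ isValue_encode g u), h⟩)).1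
      rw [← hXs.length_eq] at hlen ⊢
      exact (RedLe.CONf_succ_errTm g ar i hvs hlen hvals).mono
        (Nat.le_mul_of_pos_left _ (Nat.succ_pos _))
    · obtain rfl := hXt.resolve_left hX
      have ht := hts t (by simp)
      have hstep := RedLe.CONf_succ_encode g ar ts.length i (by omega) hvs ht Xs
      have hrest := ih (vs := vs ++ [CTm.encode g t]) (fun v hv => by
          rcases List.mem_append.1 hv with hv | hv
          · exact hvs v hv
          · rw [List.mem_singleton.1 hv]
            exact ⟨closed_encode g ht, isValue_encode g t⟩)
        (by rw [List.length_append, List.length_singleton]; omega)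
        (fun t ht => hts t (by simp [ht]))
        ((List.mem_cons.1 herr).resolve_left (Ne.symm hX))
      rw [List.length_append, List.length_singleton] at hrest
      refine (hstep.trans hrest).mono (le_of_eq ?_)
      ring

end CON

/-- constructor reconstruction in bounded time. There is a
constant `n` (depending only on the signature) such that for every
constructor `cᵢ`, every `m ≤ ar i` and all constructor terms
`t₁,…,t_{ar i}`: the term `CON^i_{x₁,…,x_m}` with `⌈t₁⌉,…,⌈t_m⌉` substituted
for its free variables, applied to `⌈t_{m+1}⌉,…,⌈t_{ar i}⌉`, reduces in at
most `n` weak CBV steps to `⌈cᵢ(t₁,…,t_{ar i})⌉`; and if the arguments in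
positions `m+1,…,ar i` are each either the corresponding `⌈tⱼ⌉` or `⊥`, with
at least one `⊥`, then it reduces in at most `n` steps to `⊥`. -/
theorem CON_bounded (g : ℕ) (ar : Fin g → ℕ) :
    ∃ n : ℕ, ∀ (i : Fin g) (m : ℕ), m ≤ ar i →
      ∀ ts : List CTm, ts.length = ar i → (∀ t ∈ ts, CTm.WFC g ar t) →
        (∃ k ≤ n, stepsN Tm.Cbv k
          (appList
            (substL (CON g ar i m) ((List.range m).map (g + 1 + ·))
              ((ts.take m).map (CTm.encode g)))
            ((ts.drop m).map (CTm.encode g)))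
          (CTm.encode g (CTm.mk i.val ts))) ∧
        (∀ Xs : List Tm, Xs.length = ar i - m →
          (∀ p < Xs.length, Xs.getD p (errTm g) = errTm g ∨
            Xs.getD p (errTm g) = CTm.encode g (ts.getD (m + p) default)) →
          errTm g ∈ Xs →
          ∃ k ≤ n, stepsN Tm.Cbv k
            (appList
              (substL (CON g ar i m) ((List.range m).map (g + 1 + ·))
                ((ts.take m).map (CTm.encode g))) Xs)
            (errTm g)) := by
  refine ⟨Finset.univ.sup ar * (2 * g + Finset.univ.sup ar + 4), fun i m hm ts hts hwf => ?_⟩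
  have hS := Finset.le_sup (f := ar) (Finset.mem_univ i)
  have hwf_take : ∀ t ∈ ts.take m, t.WFC g ar := fun t ht => hwf t (List.mem_of_mem_take ht)
  have hwf_drop : ∀ t ∈ ts.drop m, t.WFC g ar := fun t ht => hwf t (List.mem_of_mem_drop ht)
  have hlen : (ts.take m).length + (ts.drop m).length = ar i := by
    rw [List.length_take, List.length_drop]; omega
  have hcost : (ar i - m) * (2 * g + Finset.univ.sup ar + 4) ≤
      Finset.univ.sup ar * (2 * g + Finset.univ.sup ar + 4) :=
    Nat.mul_le_mul_right _ (by omega)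
  have hlen_take : (ts.take m).length = m := List.length_take_of_le (by omega)
  have hlen_drop : (ts.drop m).length = ar i - m := by rw [List.length_drop, hts]
  rw [CON, map_range_eq_xVars]
  refine ⟨?_, fun Xs hXs hXts herr => ?_⟩
  · have := RedLe.CONf_encode g ar i _ _ hlen hwf_take hwf_drop
    rw [List.take_append_drop, hlen_take, hlen_drop] at this
    exact this.mono hcost
  · have := RedLe.CONf_errTm g ar i (vs := (ts.take m).map (CTm.encode g)) (fun v hv => by
        obtain ⟨u, hu, rfl⟩ := List.mem_map.1 hv
        exact ⟨closed_encode g (hwf_take u hu), isValue_encode g u⟩)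
      (List.forall₂_drop_of_getD _ _ (by omega) hXts) (by simpa using hlen) hwf_drop herr
    rw [List.length_map, hlen_take, hlen_drop] at this
    exact this.mono hcost
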